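/- Let G be a finite simple graph with f(G) ≥ 1. Then |V(G)| ≥ χ(G) + 2, and |V(G)| = χ(G) + 2 only when G is isomorphic to K_{χ(G)−3} + C₅. -/

import Mathlib

open SimpleGraph

/-- The chromatic number of `G` as a natural number. -/
noncomputable def chi {V : Type*} (G : SimpleGraph V) : ℕ := G.chromaticNumber.toNat

/-- The independence number of `G`: the largest size of a set of pairwise
non-adjacent vertices. -/
noncomputable def indepNum {V : Type*} (G : SimpleGraph V) : ℕ :=
  sSup {n | ∃ s : Finset V, s.card = n ∧ ∀ u ∈ s, ∀ v ∈ s, u ≠ v → ¬ G.Adj u v}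

/-- The join `G + H` of two graphs: all edges of `G` and `H` together with all
edges between the two vertex sets. -/
def SimpleGraph.join {α β : Type*} (G : SimpleGraph α) (H : SimpleGraph β) :
    SimpleGraph (α ⊕ β) where
  Adj x y := match x, y with
    | Sum.inl a, Sum.inl b => G.Adj a b
    | Sum.inr a, Sum.inr b => H.Adj a b
    | Sum.inl _, Sum.inr _ => True
    | Sum.inr _, Sum.inl _ => True
  symm := ⟨by rintro (a | a) (b | b) h <;> first | trivial | exact G.adj_symm h | exact H.adj_symm h⟩
  loopless := ⟨by rintro (a | a) h <;> first | exact G.irrefl h | exact H.irrefl h⟩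


/-!
Write `H = Gᶜ`. Giving each of some pairwise disjoint cliques `Aᵢ` of `H` a single colour, and
every other vertex its own, shows `χ(G) + ∑ (|Aᵢ| - 1) ≤ |V|`. If a set `P` with
`|P| + χ(G) ≤ |V|` met every edge of `H`, then `V \ P` would be a clique of `G` with more than
`ω(G)` vertices.

If `|V| ≤ χ(G) + 1`, then `H` has an edge, so `|V| = χ(G) + 1`; hence no vertex meets every edge
of `H`, which forces two disjoint edges or a triangle, and either gives `|V| ≥ χ(G) + 2`.

If `|V| = χ(G) + 2`, then no two vertices meet every edge of `H`, and `H` has no three disjoint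
edges, no `K₄` and no triangle with an edge disjoint from it. Then `H` is triangle-free: each
vertex of a triangle would have a neighbour off it, and these three neighbours produce one of the
forbidden configurations. Given disjoint edges `ab` and `cd`, every edge meets `{a, b, c, d}`;
exactly one end of each of `ab`, `cd` has a neighbour outside this set, say `a` and `c`, and they
share a unique such neighbour `x`. The edges of `H` are then those of the `5`-cycle `abdcx`, so
`G` is the join of a complete graph with `C₅ᶜ ≅ C₅`.
-/

open Finset Function

namespace SimpleGraph

section Structure

variable {V W : Type*} {H : SimpleGraph V}

theorem eq_map_of_adj_iff {K : SimpleGraph W} (f : W ↪ V)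
    (hK : ∀ i j, H.Adj (f i) (f j) ↔ K.Adj i j) (hrange : ∀ u v, H.Adj u v → u ∈ Set.range f) :
    H = K.map f := by
  ext u v
  rw [map_adj]
  constructor
  · intro h
    obtain ⟨i, rfl⟩ := hrange _ _ h
    obtain ⟨j, rfl⟩ := hrange _ _ h.symm
    exact ⟨i, j, (hK i j).1 h, rfl, rfl⟩
  · rintro ⟨i, j, hij, rfl, rfl⟩
    exact (hK i j).2 hij

theorem not_cliqueFree_three_of_forall_exists_adj
    (hcover : ∀ s : Finset V, #s ≤ 1 → ∃ u v, H.Adj u v ∧ u ∉ s ∧ v ∉ s)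
    (h2 : ∀ a b c d, H.Adj a b → H.Adj c d → ¬[a, b, c, d].Nodup) : ¬H.CliqueFree 3 := by
  classical
  have hnbr : ∀ p q, H.Adj p q → ∃ e, H.Adj q e ∧ e ≠ p := by
    intro p q hpq
    obtain ⟨u, v, huv, hu, hv⟩ := hcover {p} (by simp)
    simp only [mem_singleton] at hu hv
    by_cases hqu : q = u
    · exact ⟨v, hqu ▸ huv, hv⟩
    by_cases hqv : q = v
    · exact ⟨u, hqv ▸ huv.symm, hu⟩
    exact (h2 p q u v hpq huv (by simp [hpq.ne, huv.ne, Ne.symm hu, Ne.symm hv, hqu, hqv])).elim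
  obtain ⟨a, b, hab, -, -⟩ := hcover ∅ (by simp)
  obtain ⟨e, hbe, hea⟩ := hnbr a b hab
  obtain ⟨f, haf, hfb⟩ := hnbr b a hab.symm
  by_cases hef : e = f
  · subst hef
    exact fun h => h {a, b, e} (is3Clique_triple_iff.2 ⟨hab, haf, hbe⟩)
  · exact (h2 a f b e haf hbe (by simp [haf.ne, hab.ne, hbe.ne, Ne.symm hea, hfb,
      Ne.symm hef])).elim

section Triangle

variable (hcover : ∀ s : Finset V, #s ≤ 2 → ∃ u v, H.Adj u v ∧ u ∉ s ∧ v ∉ s)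
  (htri : ∀ x y z u v, H.Adj x y → H.Adj x z → H.Adj y z → H.Adj u v →
    u = x ∨ u = y ∨ u = z ∨ v = x ∨ v = y ∨ v = z)
include hcover htri

theorem exists_adj_ne_ne_of_adj {x y z : V} (hxy : H.Adj x y) (hxz : H.Adj x z)
    (hyz : H.Adj y z) : ∃ u, H.Adj x u ∧ u ≠ y ∧ u ≠ z := by
  classical
  obtain ⟨u, v, huv, hu, hv⟩ := hcover {y, z} card_le_two
  simp only [mem_insert, mem_singleton, not_or] at hu hv
  rcases htri x y z u v hxy hxz hyz huv with rfl | h | h | rfl | h | h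
  · exact ⟨v, huv, hv⟩
  · exact absurd h hu.1
  · exact absurd h hu.2
  · exact ⟨u, huv.symm, hu⟩
  · exact absurd h hv.1
  · exact absurd h hv.2

theorem cliqueFree_three_of_forall_exists_adj
    (hmatch : ∀ a b c d x y, H.Adj a b → H.Adj c d → H.Adj x y → ¬[a, b, c, d, x, y].Nodup)
    (h4 : H.CliqueFree 4) : H.CliqueFree 3 := by
  classical
  have hshared : ∀ x y z u w, H.Adj x y → H.Adj x z → H.Adj y z → H.Adj x u → H.Adj y u →
      u ≠ z → H.Adj z w → w ≠ x → w ≠ y → False := by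
    intro x y z u w hxy hxz hyz hxu hyu huz hzw hwx hwy
    have hu : u = w := by
      rcases htri x y u z w hxy hxu hyu hzw with h | h | h | h | h | h
      exacts [absurd h.symm hxz.ne, absurd h.symm hyz.ne, absurd h.symm huz, absurd h hwx,
        absurd h hwy, h.symm]
    subst hu
    refine h4 (insert u {x, y, z}) ((is3Clique_triple_iff.2 ⟨hxy, hxz, hyz⟩).insert ?_)
    simp only [mem_insert, mem_singleton, forall_eq_or_imp, forall_eq]
    exact ⟨hxu.symm, hyu.symm, hzw.symm⟩
  intro s hs
  obtain ⟨x, y, z, hxy, hxz, hyz, rfl⟩ := is3Clique_iff.1 hs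
  obtain ⟨u, hxu, huy, huz⟩ := exists_adj_ne_ne_of_adj hcover htri hxy hxz hyz
  obtain ⟨v, hyv, hvx, hvz⟩ := exists_adj_ne_ne_of_adj hcover htri hxy.symm hyz hxz
  obtain ⟨w, hzw, hwx, hwy⟩ := exists_adj_ne_ne_of_adj hcover htri hxz.symm hyz.symm hxy
  by_cases huv : u = v
  · subst huv
    exact hshared x y z u w hxy hxz hyz hxu hyv huz hzw hwx hwy
  by_cases huw : u = w
  · subst huw
    exact hshared x z y u v hxz hxy hyz.symm hxu hzw huy hyv hvx hvz
  by_cases hvw : v = w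
  · subst hvw
    exact hshared y z x v u hyz hxy.symm hxz.symm hyv hzw hvx hxu huy huz
  exact hmatch x u y v z w hxu hyv hzw (by
    simp [hxu.ne, hyv.ne, hzw.ne, hxy.ne, hxz.ne, hyz.ne, Ne.symm hvx, Ne.symm hwx, huy, huv,
      huz, huw, Ne.symm hwy, hvz, hvw])

end Triangle

theorem adj_of_forall_adj_mem [DecidableEq V] {S : Finset V} {p q r s : V}
    (hS : ∀ x ∈ S, x = p ∨ x = q ∨ x = r ∨ x = s)
    (hmeets : ∀ u v, H.Adj u v → u ∈ S ∨ v ∈ S)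
    (hp : ∀ x, H.Adj p x → x ∈ S) (hq : ∀ x, H.Adj q x → x ∈ S)
    (hrs : ∃ u v, H.Adj u v ∧ u ∉ ({r, s} : Finset V) ∧ v ∉ ({r, s} : Finset V)) :
    H.Adj p q := by
  obtain ⟨u, v, huv, hu, hv⟩ := hrs
  simp only [mem_insert, mem_singleton, not_or] at hu hv
  wlog huS : u ∈ S generalizing u v
  · exact this v u huv.symm hv hu ((hmeets u v huv).resolve_left huS)
  rcases hS u huS with rfl | rfl | rfl | rfl
  · rcases hS v (hp v huv) with rfl | rfl | rfl | rfl
    exacts [absurd rfl huv.ne, huv, absurd rfl hv.1, absurd rfl hv.2]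
  · rcases hS v (hq v huv) with rfl | rfl | rfl | rfl
    exacts [huv.symm, absurd rfl huv.ne, absurd rfl hv.1, absurd rfl hv.2]
  · exact absurd rfl hu.1
  · exact absurd rfl hu.2

section FiveCycle

variable [DecidableEq V] (hT : H.CliqueFree 3)
  (hmatch : ∀ a b c d x y, H.Adj a b → H.Adj c d → H.Adj x y → ¬[a, b, c, d, x, y].Nodup)
include hT hmatch

theorem exists_adj_forall_adj_mem {a b c d : V} (hab : H.Adj a b) (hcd : H.Adj c d)
    (hdisj : Disjoint ({a, b} : Finset V) {c, d}) :
    ∃ a' b', H.Adj a' b' ∧ ({a', b'} : Finset V) = {a, b} ∧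
      ∀ x, H.Adj b' x → x ∈ ({a, b} ∪ {c, d} : Finset V) := by
  by_cases hb : ∀ x, H.Adj b x → x ∈ ({a, b} ∪ {c, d} : Finset V)
  · exact ⟨a, b, hab, rfl, hb⟩
  refine ⟨b, a, hab.symm, pair_comm b a, fun x hax => by_contra fun hx => ?_⟩
  push Not at hb
  obtain ⟨y, hby, hy⟩ := hb
  simp only [disjoint_insert_left, disjoint_insert_right, mem_insert, mem_singleton,
    disjoint_singleton, not_or] at hdisj
  simp only [mem_union, mem_insert, mem_singleton, not_or] at hx hy
  by_cases hxy : x = y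
  · subst hxy
    exact hT {a, b, x} (is3Clique_triple_iff.2 ⟨hab, hax, hby⟩)
  · refine hmatch a x b y c d hax hby hcd ?_
    simp only [List.nodup_cons, List.mem_cons, List.not_mem_nil, or_false, not_or]
    grind [hab.ne, hcd.ne, hax.ne, hby.ne]

variable (hcover : ∀ s : Finset V, #s ≤ 2 → ∃ u v, H.Adj u v ∧ u ∉ s ∧ v ∉ s)
include hcover

section Cover

variable {S : Finset V} {a b c d : V} (hS : S = {a, b} ∪ {c, d}) (hab : H.Adj a b)
  (hcd : H.Adj c d) (hdisj : Disjoint ({a, b} : Finset V) {c, d})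
  (hmeets : ∀ u v, H.Adj u v → u ∈ S ∨ v ∈ S)
  (hb : ∀ x, H.Adj b x → x ∈ S) (hd : ∀ x, H.Adj d x → x ∈ S)
include hS hab hcd hdisj hmeets hb hd

theorem exists_common_adj_notMem :
    H.Adj b d ∧ ∃ x ∉ S, H.Adj a x ∧ H.Adj c x ∧ ∀ z ∉ S, (H.Adj a z ∨ H.Adj c z) → z = x := by
  have hmem : ∀ x, x ∈ S ↔ x = a ∨ x = b ∨ x = c ∨ x = d := by
    simp only [hS, mem_union, mem_insert, mem_singleton, or_assoc, implies_true]
  simp only [disjoint_insert_left, disjoint_insert_right, mem_insert, mem_singleton,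
    disjoint_singleton, not_or] at hdisj
  have hbd : H.Adj b d := adj_of_forall_adj_mem (r := a) (s := c) (fun x hx => by grind)
    hmeets hb hd (hcover _ card_le_two)
  obtain ⟨x, hxS, hax⟩ : ∃ x ∉ S, H.Adj a x := by
    by_contra! ha
    have had : H.Adj a d := adj_of_forall_adj_mem (r := b) (s := c) (fun x hx => by grind)
      hmeets (fun x hx => by_contra fun h => ha x h hx) hd (hcover _ card_le_two)
    exact hT {a, b, d} (is3Clique_triple_iff.2 ⟨hab, had, hbd⟩)
  obtain ⟨y, hyS, hcy⟩ : ∃ y ∉ S, H.Adj c y := by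
    by_contra! hc
    have hbc : H.Adj b c := adj_of_forall_adj_mem (r := a) (s := d) (fun x hx => by grind)
      hmeets hb (fun x hx => by_contra fun h => hc x h hx) (hcover _ card_le_two)
    exact hT {b, c, d} (is3Clique_triple_iff.2 ⟨hbc, hbd, hcd⟩)
  have hspoke : ∀ z ∉ S, ∀ w ∉ S, H.Adj a z → H.Adj c w → z = w := by
    intro z hz w hw haz hcw
    by_contra hzw
    refine hmatch a z c w b d haz hcw hbd ?_
    simp only [hmem, not_or] at hz hw
    simp only [List.nodup_cons, List.mem_cons, List.not_mem_nil, or_false, not_or]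
    grind [hbd.ne]
  obtain rfl : x = y := hspoke x hxS y hyS hax hcy
  refine ⟨hbd, x, hxS, hax, hcy, fun z hz => ?_⟩
  rintro (haz | hcz)
  exacts [hspoke z hz x hxS haz hcy, (hspoke x hxS z hz hax hcz).symm]

theorem exists_eq_map_cycleGraph_five_of_forall_adj_mem :
    ∃ f : Fin 5 ↪ V, H = (cycleGraph 5).map f := by
  obtain ⟨hbd, x, hxS, hax, hcx, hx⟩ :=
    exists_common_adj_notMem hT hmatch hcover hS hab hcd hdisj hmeets hb hd
  have hmem : ∀ x, x ∈ S ↔ x = a ∨ x = b ∨ x = c ∨ x = d := by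
    simp only [hS, mem_union, mem_insert, mem_singleton, or_assoc, implies_true]
  have nad : ¬H.Adj a d := fun h => hT {a, b, d} (is3Clique_triple_iff.2 ⟨hab, h, hbd⟩)
  have nac : ¬H.Adj a c := fun h => hT {a, c, x} (is3Clique_triple_iff.2 ⟨h, hax, hcx⟩)
  have nbc : ¬H.Adj b c := fun h => hT {b, c, d} (is3Clique_triple_iff.2 ⟨h, hbd, hcd⟩)
  have nbx : ¬H.Adj b x := fun h => hxS (hb x h)
  have ndx : ¬H.Adj d x := fun h => hxS (hd x h)
  have hrange : ∀ u v, H.Adj u v → u = a ∨ u = b ∨ u = c ∨ u = d ∨ u = x := by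
    intro u v huv
    by_cases huS : u ∈ S
    · rw [hmem] at huS
      tauto
    refine .inr <| .inr <| .inr <| .inr ?_
    rcases (hmem v).1 ((hmeets u v huv).resolve_left huS) with rfl | rfl | rfl | rfl
    exacts [hx u huS (.inl huv.symm), absurd (hb u huv.symm) huS, hx u huS (.inr huv.symm),
      absurd (hd u huv.symm) huS]
  simp only [disjoint_insert_left, disjoint_insert_right, mem_insert, mem_singleton,
    disjoint_singleton, not_or] at hdisj
  simp only [hmem, not_or] at hxS
  obtain ⟨⟨hca, hcb⟩, had, hbd'⟩ := hdisj
  obtain ⟨hxa, hxb, hxc, hxd⟩ := hxS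
  let f : Fin 5 ↪ V := ⟨![a, b, d, c, x], List.nodup_ofFn.1 (by
    simp [hab.ne, had, Ne.symm hca, Ne.symm hxa, hbd', Ne.symm hcb, Ne.symm hxb, hcd.ne.symm,
      Ne.symm hxd, Ne.symm hxc])⟩
  refine ⟨f, eq_map_of_adj_iff f (fun i j => ?_) fun u v huv => ?_⟩
  · fin_cases i <;> fin_cases j <;>
      simp +decide [f, hab, hbd, hcd, hax, hcx, nad, nac, nbc, nbx, ndx, H.adj_comm]
  · rcases hrange u v huv with rfl | rfl | rfl | rfl | rfl
    exacts [⟨0, rfl⟩, ⟨1, rfl⟩, ⟨3, rfl⟩, ⟨2, rfl⟩, ⟨4, rfl⟩]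

end Cover

theorem exists_eq_map_cycleGraph_five : ∃ f : Fin 5 ↪ V, H = (cycleGraph 5).map f := by
  obtain ⟨a, b, hab, -⟩ := hcover ∅ (by simp)
  obtain ⟨c, d, hcd, hc, hd⟩ := hcover {a, b} card_le_two
  have hdisj : Disjoint ({a, b} : Finset V) {c, d} := by
    rw [disjoint_comm, disjoint_insert_left, disjoint_singleton_left]
    exact ⟨hc, hd⟩
  have hmeets : ∀ u v, H.Adj u v → u ∈ ({a, b} ∪ {c, d} : Finset V) ∨
      v ∈ ({a, b} ∪ {c, d} : Finset V) := by
    intro u v huv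
    by_contra! h
    simp only [mem_union, mem_insert, mem_singleton, not_or] at h hc hd
    refine hmatch a b c d u v hab hcd huv ?_
    simp only [List.nodup_cons, List.mem_cons, List.not_mem_nil, or_false, not_or]
    grind [hab.ne, hcd.ne, huv.ne]
  obtain ⟨a', b', hab', hpair, hb'⟩ := exists_adj_forall_adj_mem hT hmatch hab hcd hdisj
  obtain ⟨c', d', hcd', hpair', hd'⟩ := exists_adj_forall_adj_mem hT hmatch hcd hab hdisj.symm
  rw [union_comm] at hd'
  rw [← hpair, ← hpair'] at hdisj hmeets hb' hd'
  exact exists_eq_map_cycleGraph_five_of_forall_adj_mem hT hmatch hcover rfl hab' hcd' hdisj hmeets hb' hd'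

end FiveCycle

end Structure

section Coloring

theorem chi_le_of_colorable {V : Type*} {G : SimpleGraph V} {k : ℕ} (h : G.Colorable k) :
    chi G ≤ k :=
  ENat.toNat_le_of_le_natCast h.chromaticNumber_le

theorem isClique_coe_pair {V : Type*} {G : SimpleGraph V} [DecidableEq V] {a b : V}
    (h : G.Adj a b) : G.IsClique (({a, b} : Finset V) : Set V) := by
  rw [coe_pair]
  exact isClique_pair.2 fun _ => h

variable {V : Type*} [Fintype V] {G : SimpleGraph V}

theorem chi_le_card : chi G ≤ Fintype.card V :=
  chi_le_of_colorable G.colorable_of_fintype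

theorem chi_add_sum_card_le {ι : Type*} [Fintype ι] (A : ι → Finset V)
    (hA : Pairwise (Disjoint on A)) (hcl : ∀ i, Gᶜ.IsClique (A i : Set V)) :
    chi G + ∑ i, #(A i) ≤ Fintype.card V + Fintype.card ι := by
  classical
  set U := univ.biUnion A
  have hU : #U = ∑ i, #(A i) := card_biUnion fun i _ j _ hij => hA hij
  let c : V → ι ⊕ ↥(Uᶜ : Finset V) := fun v =>
    if h : ∃ i, v ∈ A i then .inl h.choose else .inr ⟨v, by simpa [U] using h⟩
  have hc : ∀ {u v}, G.Adj u v → c u ≠ c v := by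
    intro u v huv
    by_cases hu : ∃ i, u ∈ A i <;> by_cases hv : ∃ i, v ∈ A i <;>
      simp only [c, hu, hv, dite_true, dite_false, ne_eq, reduceCtorEq, not_false_eq_true,
        Sum.inl.injEq, Sum.inr.injEq, Subtype.mk.injEq]
    · intro hij
      have hv' := hv.choose_spec
      rw [← hij] at hv'
      exact ((hcl _) hu.choose_spec hv' huv.ne).2 huv
    · exact huv.ne
  have hχ := chi_le_of_colorable (Coloring.mk c hc).colorable
  have hUV : #U ≤ Fintype.card V := card_le_univ U
  simp only [Fintype.card_sum, Fintype.card_coe, card_compl] at hχ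
  omega

theorem chi_add_card_le_of_isClique_compl {s : Finset V} (hs : Gᶜ.IsClique (s : Set V)) :
    chi G + #s ≤ Fintype.card V + 1 := by
  simpa using chi_add_sum_card_le (ι := Unit) (fun _ => s) (fun _ _ h => (h rfl).elim)
    fun _ => hs

theorem chi_add_card_add_card_le_of_isClique_compl {s t : Finset V}
    (hs : Gᶜ.IsClique (s : Set V)) (ht : Gᶜ.IsClique (t : Set V)) (hst : Disjoint s t) :
    chi G + #s + #t ≤ Fintype.card V + 2 := by
  have hA : Pairwise (Disjoint on ![s, t]) := by
    intro i j hij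
    fin_cases i <;> fin_cases j <;> simp_all [onFun, disjoint_comm]
  simpa [Fin.sum_univ_two, add_assoc] using
    chi_add_sum_card_le ![s, t] hA (Fin.forall_fin_two.2 ⟨hs, ht⟩)

theorem chi_add_three_le_of_compl_adj {a b c d x y : V} (hab : Gᶜ.Adj a b) (hcd : Gᶜ.Adj c d)
    (hxy : Gᶜ.Adj x y) (hnd : [a, b, c, d, x, y].Nodup) : chi G + 3 ≤ Fintype.card V := by
  classical
  let A : Fin 3 → Finset V := ![{a, b}, {c, d}, {x, y}]
  have hA : Pairwise (Disjoint on A) := by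
    simp only [List.nodup_cons, List.mem_cons, List.not_mem_nil] at hnd
    intro i j hij
    fin_cases i <;> fin_cases j <;> simp_all [A, onFun, eq_comm]
  have hcl : ∀ i, Gᶜ.IsClique (A i : Set V) := by
    simp only [A, Fin.forall_fin_succ, Matrix.cons_val_zero, Matrix.cons_val_succ,
      IsEmpty.forall_iff]
    exact ⟨isClique_coe_pair hab, isClique_coe_pair hcd, isClique_coe_pair hxy, trivial⟩
  have := chi_add_sum_card_le _ hA hcl
  simp [A, Fin.sum_univ_three, card_pair hab.ne, card_pair hcd.ne, card_pair hxy.ne] at this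
  omega

theorem compl_adj_mem_triangle_of_card_le (hn : Fintype.card V ≤ chi G + 2) {x y z u v : V}
    (hxy : Gᶜ.Adj x y) (hxz : Gᶜ.Adj x z) (hyz : Gᶜ.Adj y z) (huv : Gᶜ.Adj u v) :
    u = x ∨ u = y ∨ u = z ∨ v = x ∨ v = y ∨ v = z := by
  classical
  by_contra! h
  have hxyz := is3Clique_triple_iff.2 ⟨hxy, hxz, hyz⟩
  have := chi_add_card_add_card_le_of_isClique_compl hxyz.isClique (isClique_coe_pair huv)
    (by simp_all [eq_comm])
  rw [hxyz.card_eq, card_pair huv.ne] at this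
  omega

variable (hf : G.cliqueNum + 1 ≤ chi G)
include hf

theorem exists_compl_adj_of_card_add_chi_le (s : Finset V)
    (hs : #s + chi G ≤ Fintype.card V) : ∃ u v, Gᶜ.Adj u v ∧ u ∉ s ∧ v ∉ s := by
  classical
  by_contra! h
  have hcl : G.IsClique ((univ \ s : Finset V) : Set V) := by
    intro u hu v hv huv
    by_contra hG
    simp only [coe_sdiff, coe_univ, Set.mem_sdiff, Set.mem_univ, true_and, mem_coe] at hu hv
    exact hv (h u v ⟨huv, hG⟩ hu)
  have := hcl.card_le_cliqueNum
  rw [card_univ_sdiff] at this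
  have := card_le_univ s
  omega

theorem chi_add_two_le_card : chi G + 2 ≤ Fintype.card V := by
  classical
  by_contra! hlt
  obtain ⟨u, v, huv, -, -⟩ := exists_compl_adj_of_card_add_chi_le hf ∅ (by simpa using chi_le_card)
  have h1 := chi_add_card_le_of_isClique_compl (isClique_coe_pair huv)
  rw [card_pair huv.ne] at h1
  refine not_cliqueFree_three_of_forall_exists_adj
    (fun s hs => exists_compl_adj_of_card_add_chi_le hf s (by omega))
    (fun a b c d hab hcd hnd => ?_) fun s hs => ?_
  · have := chi_add_card_add_card_le_of_isClique_compl (isClique_coe_pair hab)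
      (isClique_coe_pair hcd) (by simp_all [eq_comm])
    rw [card_pair hab.ne, card_pair hcd.ne] at this
    omega
  · have := chi_add_card_le_of_isClique_compl hs.isClique
    rw [hs.card_eq] at this
    omega

end Coloring

def Iso.join {α α' β β' : Type*} {G₁ : SimpleGraph α} {G₂ : SimpleGraph α'}
    {H₁ : SimpleGraph β} {H₂ : SimpleGraph β'} (e₁ : G₁ ≃g G₂) (e₂ : H₁ ≃g H₂) :
    G₁.join H₁ ≃g G₂.join H₂ where
  toEquiv := Equiv.sumCongr e₁.toEquiv e₂.toEquiv
  map_rel_iff' := by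
    rintro (a | a) (b | b) <;> simp [SimpleGraph.join, Iso.map_adj_iff]

open scoped Classical in
noncomputable def joinIsoComplMap {V W : Type*} (K : SimpleGraph W) (f : W ↪ V) :
    (⊤ : SimpleGraph ↥(Set.range f)ᶜ).join Kᶜ ≃g (K.map f)ᶜ where
  toEquiv := (Equiv.sumCongr (Equiv.refl _) (Equiv.ofInjective f f.injective)).trans
    ((Equiv.sumComm _ _).trans (Equiv.Set.sumCompl (Set.range f)))
  map_rel_iff' := by
    rintro (⟨u, hu⟩ | w) (⟨u', hu'⟩ | w')
    · simp only [Set.mem_compl_iff, Set.mem_range, not_exists] at hu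
      simp [SimpleGraph.join, hu]
    · simp only [Set.mem_compl_iff, Set.mem_range, not_exists] at hu
      simp [SimpleGraph.join, hu, Ne.symm (hu _)]
    · simp only [Set.mem_compl_iff, Set.mem_range, not_exists] at hu'
      simp [SimpleGraph.join, hu']
    · simp [SimpleGraph.join]

/-- Multiplication by `2` turns distance `2` in `Fin 5` into distance `1`. -/
def complCycleGraphFiveIso : (cycleGraph 5)ᶜ ≃g cycleGraph 5 where
  toFun i := 2 * i
  invFun i := 3 * i
  left_inv := by decide
  right_inv := by decide
  map_rel_iff' := by decide

theorem nonempty_iso_join_of_compl_eq_map {V W : Type*} [Fintype V] [Fintype W]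
    {G : SimpleGraph V} {K : SimpleGraph W} {m : ℕ} (f : W ↪ V) (h : Gᶜ = K.map f)
    (hcard : Fintype.card V = m + Fintype.card W) :
    Nonempty (G ≃g (⊤ : SimpleGraph (Fin m)).join Kᶜ) := by
  classical
  rw [← compl_compl G, h]
  have hm : Fintype.card ↥(Set.range f)ᶜ = m := by
    rw [Fintype.card_compl_set, Set.card_range_of_injective f.injective]
    omega
  exact ⟨(joinIsoComplMap K f).symm.trans
    (Iso.join (Iso.completeGraph (Fintype.equivFinOfCardEq hm)) Iso.refl)⟩

end SimpleGraph

theorem statement_3 {V : Type} [Fintype V] (G : SimpleGraph V)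
    (hf : G.cliqueNum + 1 ≤ chi G) :
    chi G + 2 ≤ Fintype.card V ∧
    (Fintype.card V = chi G + 2 →
      Nonempty (G ≃g SimpleGraph.join (⊤ : SimpleGraph (Fin (chi G - 3)))
        (cycleGraph 5))) := by
  classical
  have hcover := exists_compl_adj_of_card_add_chi_le hf
  refine ⟨chi_add_two_le_card hf, fun hn => ?_⟩
  have hcover₂ : ∀ s : Finset V, #s ≤ 2 → ∃ u v, Gᶜ.Adj u v ∧ u ∉ s ∧ v ∉ s :=
    fun s hs => hcover s (by omega)
  have hmatch : ∀ a b c d x y, Gᶜ.Adj a b → Gᶜ.Adj c d → Gᶜ.Adj x y → ¬[a, b, c, d, x, y].Nodup :=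
    fun a b c d x y hab hcd hxy hnd => by
      have := chi_add_three_le_of_compl_adj hab hcd hxy hnd
      omega
  have h4 : Gᶜ.CliqueFree 4 := fun s hs => by
    have := chi_add_card_le_of_isClique_compl hs.isClique
    rw [hs.card_eq] at this
    omega
  obtain ⟨f, hGf⟩ := exists_eq_map_cycleGraph_five
    (cliqueFree_three_of_forall_exists_adj hcover₂
      (fun x y z u v => compl_adj_mem_triangle_of_card_le hn.le) hmatch h4) hmatch hcover₂
  have h5 := Fintype.card_le_of_embedding f
  obtain ⟨e⟩ := nonempty_iso_join_of_compl_eq_map (m := chi G - 3) f hGf (by rw [Fintype.card_fin] at h5 ⊢; omega)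
  exact ⟨e.trans (Iso.join Iso.refl complCycleGraphFiveIso)⟩
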